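/- Let K be an algebraically closed field of characteristic 0, let d ≥ 5 be an odd integer, and let β ∈ K^× be such that F = X^d + Y^d + Z^{d−1}·X + β·X^{d−2}·Y² is nonsingular. Then Aut(F) is the cyclic group of order d−1 generated by the class of the diagonal matrix diag(1,1,ζ_{d−1}), where ζ_{d−1} ∈ K is a primitive (d−1)-th root of unity. -/

import Mathlib

/-!
Call `p` a total flex of `F` if the tangent line at `p` meets the curve only at `p`; this notion
is invariant under `Aut(F)`, and `(0 : 0 : 1)` is a total flex (its tangent line `x = 0` cuts out
`y^d`). It is the only one: at a total flex `p ≠ (0 : 0 : 1)` the tangent line misses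
`(0 : 0 : 1)`, so it is `z = αx + γy`, and `F(s, 1, αs + γ)` has a single root. It has degree
`d` (otherwise its point at infinity and an affine root give two points), so it is `L (s - s₀)^d`,
and its coefficients of `s⁰, s¹, s², s^(d-1)` then force `2^(d-1) = 2(d-1)`, false for `d ≥ 5`.
Hence every automorphism fixes `(0 : 0 : 1)`, the gradient there makes it lower triangular, and
evaluating `F ∘ A = λ F` at a few points forces `A = a · diag(1, 1, ζ^k)`.
-/

open MvPolynomial Matrix

noncomputable section

variable {K : Type*} [Field K]

/-- The substitution `F ∘ A`, i.e. `X i ↦ ∑ j, A i j • X j`. -/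
def substPoly (A : Matrix (Fin 3) (Fin 3) K) (F : MvPolynomial (Fin 3) K) :
    MvPolynomial (Fin 3) K :=
  aeval (fun i => ∑ j, A i j • X j) F

lemma substPoly_one (F : MvPolynomial (Fin 3) K) : substPoly 1 F = F := by
  have h : (fun i => ∑ j, (1 : Matrix (Fin 3) (Fin 3) K) i j • X j)
      = (X : Fin 3 → MvPolynomial (Fin 3) K) := by
    funext i
    simp [Matrix.one_apply, ite_smul]
  rw [substPoly, h]
  exact aeval_X_left_apply F

lemma substPoly_smul (A : Matrix (Fin 3) (Fin 3) K) (c : K) (F : MvPolynomial (Fin 3) K) :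
    substPoly A (c • F) = c • substPoly A F := by
  unfold substPoly
  exact _root_.map_smul (aeval fun i => ∑ j, A i j • X j) c F

lemma substPoly_mul (A B : Matrix (Fin 3) (Fin 3) K) (F : MvPolynomial (Fin 3) K) :
    substPoly (A * B) F = substPoly B (substPoly A F) := by
  have hfun : (fun i => ∑ j, (A * B) i j • (X j : MvPolynomial (Fin 3) K))
      = fun i => (aeval fun i => (∑ j, B i j • X j : MvPolynomial (Fin 3) K))
          (∑ j, A i j • X j : MvPolynomial (Fin 3) K) := by
    funext i
    rw [map_sum]
    simp only [_root_.map_smul, aeval_X, Matrix.mul_apply, Finset.sum_smul, Finset.smul_sum, smul_smul]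
    exact Finset.sum_comm
  have h1 : substPoly (A * B) F
      = aeval (fun i => (aeval fun i => (∑ j, B i j • X j : MvPolynomial (Fin 3) K))
          (∑ j, A i j • X j : MvPolynomial (Fin 3) K)) F := by
    unfold substPoly
    exact congrArg
      (fun f => (aeval f : MvPolynomial (Fin 3) K →ₐ[K] MvPolynomial (Fin 3) K) F) hfun
  rw [h1, ← MvPolynomial.comp_aeval]
  rfl

/-- The subgroup of `GL₃(K)` preserving the polynomial `F` up to scalar. -/
def autGL (F : MvPolynomial (Fin 3) K) : Subgroup (GL (Fin 3) K) where
  carrier := {A | ∃ c : Kˣ, substPoly (A : Matrix (Fin 3) (Fin 3) K) F = (c : K) • F}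
  one_mem' := ⟨1, by simp [substPoly_one]⟩
  mul_mem' := by
    rintro A B ⟨c, hc⟩ ⟨e, he⟩
    refine ⟨c * e, ?_⟩
    have hAB : ((A * B : GL (Fin 3) K) : Matrix (Fin 3) (Fin 3) K)
        = (A : Matrix (Fin 3) (Fin 3) K) * (B : Matrix (Fin 3) (Fin 3) K) := rfl
    rw [hAB, substPoly_mul, hc, substPoly_smul, he, smul_smul, ← Units.val_mul]
  inv_mem' := by
    rintro A ⟨c, hc⟩
    refine ⟨c⁻¹, ?_⟩
    have key : (c : K) • substPoly ((A⁻¹ : GL (Fin 3) K) : Matrix (Fin 3) (Fin 3) K) F = F := by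
      rw [← substPoly_smul, ← hc, ← substPoly_mul]
      have h1 : (A : Matrix (Fin 3) (Fin 3) K) *
          ((A⁻¹ : GL (Fin 3) K) : Matrix (Fin 3) (Fin 3) K) = 1 := by
        exact_mod_cast Units.mul_inv A
      rw [h1, substPoly_one]
    calc substPoly ((A⁻¹ : GL (Fin 3) K) : Matrix (Fin 3) (Fin 3) K) F
        = ((c : K)⁻¹ * (c : K)) •
            substPoly ((A⁻¹ : GL (Fin 3) K) : Matrix (Fin 3) (Fin 3) K) F := by
          rw [inv_mul_cancel₀ (Units.ne_zero c), one_smul]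
      _ = (c : K)⁻¹ • ((c : K) •
            substPoly ((A⁻¹ : GL (Fin 3) K) : Matrix (Fin 3) (Fin 3) K) F) := by
          rw [smul_smul]
      _ = (c : K)⁻¹ • F := by rw [key]
      _ = ((c⁻¹ : Kˣ) : K) • F := by rw [Units.val_inv_eq_inv_val]

/-- `PGL₃(K)`: the quotient of `GL₃(K)` by its center (the scalar matrices). -/
abbrev PGL3 (K : Type*) [Field K] := GL (Fin 3) K ⧸ Subgroup.center (GL (Fin 3) K)

/-- The automorphism group of the plane curve `F = 0`, as a subgroup of `PGL₃(K)`: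
the classes of matrices `A` with `F ∘ A = λ • F` for some `λ ∈ Kˣ`. -/
def projAut (F : MvPolynomial (Fin 3) K) : Subgroup (PGL3 K) :=
  (autGL F).map (QuotientGroup.mk' (Subgroup.center (GL (Fin 3) K)))

/-- `F` is nonsingular: the only common zero of its partial derivatives is the origin. -/
def IsNonsingular (F : MvPolynomial (Fin 3) K) : Prop :=
  ∀ x : Fin 3 → K, (∀ i, eval x (pderiv i F) = 0) → x = 0

/-- `F` and `G` are projectively equivalent: `F ∘ A = λ • G` for some `A ∈ GL₃(K)`, `λ ∈ Kˣ`. -/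
def ProjEquiv (F G : MvPolynomial (Fin 3) K) : Prop :=
  ∃ A : GL (Fin 3) K, ∃ c : Kˣ,
    substPoly (A : Matrix (Fin 3) (Fin 3) K) F = (c : K) • G

lemma MvPolynomial.pderiv_aeval {σ τ R : Type*} [CommSemiring R] [Fintype σ]
    (g : σ → MvPolynomial τ R) (f : MvPolynomial σ R) (j : τ) :
    pderiv j (aeval g f) = ∑ i, pderiv j (g i) * aeval g (pderiv i f) := by
  classical
  induction f using MvPolynomial.induction_on with
  | C a => simp
  | add p q hp hq => simp only [map_add, hp, hq, mul_add, Finset.sum_add_distrib]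
  | mul_X p k hp =>
    simp only [_root_.map_mul, aeval_X, pderiv_mul, hp, pderiv_X, map_add, mul_add,
      Finset.sum_add_distrib, Finset.sum_mul, Pi.single_apply, apply_ite (aeval g),
      map_zero, mul_ite, mul_one, mul_zero, Finset.sum_ite_eq, Finset.mem_univ, if_true]
    simp only [mul_assoc]
    ring

lemma eval_substPoly (M : Matrix (Fin 3) (Fin 3) K) (G : MvPolynomial (Fin 3) K)
    (v : Fin 3 → K) : eval v (substPoly M G) = eval (M *ᵥ v) G := by
  induction G using MvPolynomial.induction_on with
  | C a => simp [substPoly]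
  | add p q hp hq => simp_all [substPoly]
  | mul_X p k hp => simp_all [substPoly, mulVec, dotProduct, mul_comm]

lemma pderiv_substPoly (M : Matrix (Fin 3) (Fin 3) K) (G : MvPolynomial (Fin 3) K)
    (j : Fin 3) : pderiv j (substPoly M G) = ∑ i, M i j • substPoly M (pderiv i G) := by
  rw [substPoly, MvPolynomial.pderiv_aeval]
  refine Finset.sum_congr rfl fun i _ => ?_
  simp [substPoly, pderiv_X, Pi.single_apply, smul_eq_C_mul]

def evalGradient (F : MvPolynomial (Fin 3) K) (v : Fin 3 → K) : Fin 3 → K :=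
  fun i => eval v (pderiv i F)

def IsTotalFlex (F : MvPolynomial (Fin 3) K) (p : Fin 3 → K) : Prop :=
  eval p F = 0 ∧ ∀ q, q ⬝ᵥ evalGradient F p = 0 → eval q F = 0 → ∃ t : K, q = t • p

section Invariance

variable {F : MvPolynomial (Fin 3) K} {M : Matrix (Fin 3) (Fin 3) K} {c : K}

lemma eval_mulVec_of_substPoly_eq (h : substPoly M F = c • F) (v : Fin 3 → K) :
    eval (M *ᵥ v) F = c * eval v F := by
  rw [← eval_substPoly, h, smul_eval]

lemma evalGradient_mulVec_vecMul_of_substPoly_eq (h : substPoly M F = c • F) (v : Fin 3 → K) :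
    evalGradient F (M *ᵥ v) ᵥ* M = c • evalGradient F v := by
  funext j
  have hj := congrArg (fun G => eval v (pderiv j G)) h
  simp only [pderiv_substPoly, map_sum, smul_eval, eval_substPoly] at hj
  simpa [vecMul, dotProduct, evalGradient, mul_comm] using hj

lemma IsTotalFlex.mulVec {B : GL (Fin 3) K} (hc : c ≠ 0)
    (hB : substPoly (B : Matrix (Fin 3) (Fin 3) K) F = c • F) {p : Fin 3 → K}
    (hp : IsTotalFlex F p) : IsTotalFlex F ((B : Matrix (Fin 3) (Fin 3) K) *ᵥ p) := by
  obtain ⟨hpF, hline⟩ := hp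
  refine ⟨by rw [eval_mulVec_of_substPoly_eq hB, hpF, mul_zero], fun q hq hqF => ?_⟩
  set q' := ((B⁻¹ : GL (Fin 3) K) : Matrix (Fin 3) (Fin 3) K) *ᵥ q
  have hBq' : (B : Matrix (Fin 3) (Fin 3) K) *ᵥ q' = q := by
    rw [mulVec_mulVec, ← Units.val_mul, mul_inv_cancel, Units.val_one, one_mulVec]
  obtain ⟨t, ht⟩ : ∃ t : K, q' = t • p := by
    refine hline q' ?_ ?_
    · have : c * (q' ⬝ᵥ evalGradient F p) = 0 := by
        rw [← smul_eq_mul, ← dotProduct_smul, ← evalGradient_mulVec_vecMul_of_substPoly_eq hB,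
          dotProduct_comm, ← dotProduct_mulVec, hBq', dotProduct_comm, hq]
      exact (mul_eq_zero.mp this).resolve_left hc
    · have := eval_mulVec_of_substPoly_eq hB q'
      rw [hBq', hqF, zero_eq_mul] at this
      exact this.resolve_left hc
  exact ⟨t, by rw [← hBq', ht, mulVec_smul]⟩

end Invariance

lemma Polynomial.coeff_C_mul_X_add_C_pow {R : Type*} [CommSemiring R] (a b : R) (n k : ℕ) :
    ((Polynomial.C a * Polynomial.X + Polynomial.C b) ^ n).coeff k
      = b ^ (n - k) * n.choose k * a ^ k := by
  have : (Polynomial.C a * Polynomial.X + Polynomial.C b) ^ n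
      = ((Polynomial.X + Polynomial.C b) ^ n).comp (Polynomial.C a * Polynomial.X) := by
    simp [Polynomial.pow_comp]
  rw [this, Polynomial.comp_C_mul_X_coeff, Polynomial.coeff_X_add_C_pow]

def perturbedFermat (d : ℕ) (β : K) : MvPolynomial (Fin 3) K :=
  X 0 ^ d + X 1 ^ d + X 2 ^ (d - 1) * X 0 + C β * X 0 ^ (d - 2) * X 1 ^ 2

section PerturbedFermat

variable (d : ℕ) (β : K)

lemma eval_perturbedFermat (v : Fin 3 → K) :
    eval v (perturbedFermat d β)
      = v 0 ^ d + v 1 ^ d + v 2 ^ (d - 1) * v 0 + β * v 0 ^ (d - 2) * v 1 ^ 2 := by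
  simp [perturbedFermat]

lemma evalGradient_perturbedFermat (v : Fin 3 → K) :
    evalGradient (perturbedFermat d β) v =
      ![d * v 0 ^ (d - 1) + v 2 ^ (d - 1) + (d - 2 : ℕ) * β * v 0 ^ (d - 3) * v 1 ^ 2,
        d * v 1 ^ (d - 1) + 2 * β * v 0 ^ (d - 2) * v 1,
        (d - 1 : ℕ) * v 2 ^ (d - 2) * v 0] := by
  funext i
  fin_cases i <;>
    simp [evalGradient, perturbedFermat, pderiv_X, Nat.sub_sub] <;> ring

lemma isTotalFlex_perturbedFermat_e3 (hd : 3 ≤ d) :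
    IsTotalFlex (perturbedFermat d β) ![0, 0, 1] := by
  have hgrad : evalGradient (perturbedFermat d β) ![0, 0, 1] = ![1, 0, 0] := by
    rw [evalGradient_perturbedFermat]
    simp [show d - 1 ≠ 0 by omega]
  refine ⟨by simp [eval_perturbedFermat, show d ≠ 0 by omega], fun q hq hqF => ?_⟩
  have hq0 : q 0 = 0 := by simpa [hgrad, vec3_dotProduct, vecHead] using hq
  have hq1 : q 1 = 0 := by
    simpa [eval_perturbedFermat, hq0, show d ≠ 0 by omega, show d - 2 ≠ 0 by omega] using hqF
  exact ⟨q 2, by ext i; fin_cases i <;> simp [hq0, hq1]⟩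

end PerturbedFermat

def lineRestriction (d : ℕ) (β α γ : K) : Polynomial K :=
  Polynomial.X ^ d + 1 + Polynomial.X * (Polynomial.C α * Polynomial.X + Polynomial.C γ) ^ (d - 1)
    + Polynomial.C β * Polynomial.X ^ (d - 2)

section LineRestriction

variable {d : ℕ} (β α γ : K)

lemma eval_lineRestriction (s : K) :
    (lineRestriction d β α γ).eval s = eval ![s, 1, α * s + γ] (perturbedFermat d β) := by
  simp [lineRestriction, eval_perturbedFermat]
  ring

lemma coeff_lineRestriction (k : ℕ) :
    (lineRestriction d β α γ).coeff k = (if k = d then 1 else 0) + (if k = 0 then 1 else 0)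
      + (if k = 0 then 0 else γ ^ (d - k) * (d - 1).choose (k - 1) * α ^ (k - 1))
      + (if k = d - 2 then β else 0) := by
  rcases k with _ | k
  · simp [lineRestriction, Polynomial.coeff_X_pow, Polynomial.coeff_one]
  · simp only [lineRestriction, Polynomial.coeff_add, Polynomial.coeff_X_pow,
      Polynomial.coeff_one, Polynomial.coeff_X_mul, Polynomial.coeff_C_mul_X_add_C_pow,
      Polynomial.coeff_C_mul]
    simp [show d - 1 - k = d - (k + 1) by omega]

lemma lineRestriction_ne_C_mul_X_sub_C_pow [CharZero K] (hd : 5 ≤ d) (L s : K) :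
    lineRestriction d β α γ ≠ Polynomial.C L * (Polynomial.X - Polynomial.C s) ^ d := by
  intro h
  have hcoeff (k : ℕ) :
      (lineRestriction d β α γ).coeff k = L * ((-s) ^ (d - k) * d.choose k) := by
    rw [h, sub_eq_add_neg, ← Polynomial.C_neg, Polynomial.coeff_C_mul,
      Polynomial.coeff_X_add_C_pow]
  obtain ⟨m, rfl⟩ := Nat.exists_eq_add_of_le' hd
  obtain ⟨σ, rfl⟩ : ∃ σ, s = -σ := ⟨-s, (neg_neg s).symm⟩
  have E0 : 1 = L * σ ^ (m + 5) := by simpa [coeff_lineRestriction] using hcoeff 0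
  have E1 : γ ^ (m + 4) = L * (σ ^ (m + 4) * (m + 5)) := by
    simpa [coeff_lineRestriction] using hcoeff 1
  have E2 : γ ^ (m + 3) * (m + 4) * α = L * (σ ^ (m + 3) * ((m + 5) * (m + 4) / 2)) := by
    simpa [coeff_lineRestriction, Nat.cast_choose_two, add_sub_assoc,
      show (5 : K) - 1 = 4 by norm_num] using hcoeff 2
  have E3 : γ * (m + 4) * α ^ (m + 3) = L * (σ * (m + 5)) := by
    simpa [coeff_lineRestriction, add_assoc] using hcoeff (m + 4)
  have hm4 : (m + 4 : K) ≠ 0 := by norm_cast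
  have hm5 : (m + 5 : K) ≠ 0 := by norm_cast
  have hu : γ ^ (m + 4) * σ = m + 5 := by linear_combination σ * E1 - (m + 5) * E0
  have hv : 2 * α * γ ^ (m + 3) * σ ^ 2 = m + 5 := by
    refine mul_left_cancel₀ hm4 ?_
    linear_combination 2 * σ ^ 2 * E2 - (m + 5) * (m + 4) * E0
  have hw : (m + 4) * γ * α ^ (m + 3) * σ ^ (m + 4) = m + 5 := by
    linear_combination σ ^ (m + 4) * E3 - (m + 5) * E0
  -- with `w = α σ`: coefficients `s¹, s²` give `γ = 2w`, and then `s¹, s^(d-1)` compute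
  -- `w^(d-1) σ` in two ways
  obtain rfl : γ = 2 * (α * σ) := by
    refine mul_left_cancel₀ hm5 ?_
    linear_combination 2 * α * σ * hu - γ * hv
  have hP : ((2 : K) ^ (m + 4) - 2 * (m + 4)) * ((α * σ) ^ (m + 4) * σ) = 0 := by
    linear_combination hu - hw
  have hP0 : (α * σ) ^ (m + 4) * σ ≠ 0 := by
    intro h0
    apply hm5
    linear_combination -hu + 2 ^ (m + 4) * h0
  have hpow : (2 : K) ^ (m + 4) = 2 * (m + 4) := by
    linear_combination (mul_eq_zero.mp hP).resolve_right hP0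
  have hpowℕ : 2 ^ (m + 4) = 2 * (m + 4) := by exact_mod_cast hpow
  have := Nat.lt_two_pow_self (n := m)
  rw [pow_add] at hpowℕ
  omega

lemma exists_isRoot_lineRestriction [IsAlgClosed K] (hd : 4 ≤ d) (hβ : β ≠ 0) :
    ∃ s, (lineRestriction d β α γ).IsRoot s := by
  obtain ⟨k, hk, hcoeff⟩ : ∃ k, k ≠ 0 ∧ (lineRestriction d β α γ).coeff k ≠ 0 := by
    by_cases hγ : γ = 0
    · refine ⟨d - 2, by omega, ?_⟩
      simpa [coeff_lineRestriction, hγ, show d - 2 ≠ d by omega, show d - 2 ≠ 0 by omega,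
        show d - (d - 2) ≠ 0 by omega] using hβ
    · refine ⟨1, one_ne_zero, ?_⟩
      simpa [coeff_lineRestriction, show 1 ≠ d by omega, show 1 ≠ d - 2 by omega,
        show d - 1 ≠ 0 by omega] using hγ
  refine IsAlgClosed.exists_root _ fun h0 => hcoeff ?_
  exact Polynomial.coeff_eq_zero_of_natDegree_lt
    (by rw [Polynomial.natDegree_eq_of_degree_eq_some h0]; exact Nat.pos_of_ne_zero hk)

lemma exists_isRoot_ne_lineRestriction [IsAlgClosed K] [CharZero K] (hd : 5 ≤ d)
    (hL : 1 + α ^ (d - 1) ≠ 0) :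
    ∃ s s', (lineRestriction d β α γ).IsRoot s ∧ (lineRestriction d β α γ).IsRoot s' ∧
      s ≠ s' := by
  set Q := lineRestriction d β α γ
  have hdeg : Q.natDegree = d := by
    refine Polynomial.natDegree_eq_of_le_of_coeff_ne_zero ?_ ?_
    · refine Polynomial.natDegree_le_iff_coeff_eq_zero.mpr fun k hk => ?_
      simp [Q, coeff_lineRestriction, Nat.choose_eq_zero_of_lt (by omega : d - 1 < k - 1),
        show k ≠ d by omega, show k ≠ 0 by omega, show k ≠ d - 2 by omega]
    · simpa [Q, coeff_lineRestriction, show d ≠ 0 by omega, show d ≠ d - 2 by omega] using hL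
  have hcard : Q.roots.card = d := by rw [IsAlgClosed.card_roots_eq_natDegree, hdeg]
  obtain ⟨s, hs⟩ := Multiset.card_pos_iff_exists_mem.mp (show 0 < Q.roots.card by omega)
  by_contra! hall
  have hroots : Q.roots = Multiset.replicate d s := by
    refine Multiset.eq_replicate.mpr ⟨hcard, fun s' hs' => ?_⟩
    exact hall s' s (Polynomial.isRoot_of_mem_roots hs') (Polynomial.isRoot_of_mem_roots hs)
  refine lineRestriction_ne_C_mul_X_sub_C_pow β α γ hd Q.leadingCoeff s ?_
  calc Q = Polynomial.C Q.leadingCoeff * (Q.roots.map (Polynomial.X - Polynomial.C ·)).prod :=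
        (Polynomial.C_leadingCoeff_mul_prod_multiset_X_sub_C (hcard.trans hdeg.symm)).symm
    _ = _ := by simp [hroots]

end LineRestriction

section TotalFlex

variable [IsAlgClosed K] [CharZero K] {d : ℕ} {β : K}

lemma evalGradient_perturbedFermat_two_eq_zero_of_isTotalFlex (hd : 5 ≤ d) (hβ : β ≠ 0)
    {p : Fin 3 → K} (hp : IsTotalFlex (perturbedFermat d β) p) :
    evalGradient (perturbedFermat d β) p 2 = 0 := by
  obtain ⟨-, hline⟩ := hp
  set φ := evalGradient (perturbedFermat d β) p
  by_contra hφ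
  -- the tangent line at `p` is `z = α x + γ y`
  set α := -φ 0 / φ 2
  set γ := -φ 1 / φ 2
  have htangent (x y : K) : ![x, y, α * x + γ * y] ⬝ᵥ φ = 0 := by
    simp only [vec3_dotProduct, cons_val, α, γ]
    field_simp
    ring
  have hroot {s : K} (hs : (lineRestriction d β α γ).IsRoot s) :
      p 1 ≠ 0 ∧ s = p 0 / p 1 := by
    obtain ⟨t, ht⟩ := hline _ (by simpa only [mul_one] using htangent s 1)
      (by rw [← eval_lineRestriction]; exact hs)
    have h0 : s = t * p 0 := by simpa using congrFun ht 0
    have h1 : 1 = t * p 1 := by simpa using congrFun ht 1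
    have hp1 : p 1 ≠ 0 := by rintro h; simp [h] at h1
    exact ⟨hp1, by rw [eq_div_iff hp1]; linear_combination p 1 * h0 - p 0 * h1⟩
  by_cases hL : 1 + α ^ (d - 1) = 0
  -- then the point at infinity `(1 : 0 : α)` of the tangent line lies on the curve
  · obtain ⟨t, ht⟩ := hline ![1, 0, α]
      (by simpa only [mul_one, mul_zero, add_zero] using htangent 1 0)
      (by rw [eval_perturbedFermat]; simp [show d ≠ 0 by omega]; linear_combination hL)
    have h0 : 1 = t * p 0 := by simpa using congrFun ht 0
    have h1 : 0 = t * p 1 := by simpa using congrFun ht 1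
    obtain ⟨s, hs⟩ := exists_isRoot_lineRestriction β α γ (by omega : 4 ≤ d) hβ
    exact (hroot hs).1 ((mul_eq_zero.mp h1.symm).resolve_left (left_ne_zero_of_mul_eq_one h0.symm))
  · obtain ⟨s, s', hs, hs', hne⟩ := exists_isRoot_ne_lineRestriction β α γ hd hL
    exact hne ((hroot hs).2.trans (hroot hs').2.symm)

lemma eq_zero_of_isTotalFlex_perturbedFermat (hd : 5 ≤ d) (hβ : β ≠ 0) {p : Fin 3 → K}
    (hp : IsTotalFlex (perturbedFermat d β) p) : p 0 = 0 ∧ p 1 = 0 := by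
  have hφ := evalGradient_perturbedFermat_two_eq_zero_of_isTotalFlex hd hβ hp
  obtain ⟨t, ht⟩ := hp.2 ![0, 0, 1]
    (by simpa only [vec3_dotProduct, cons_val, zero_mul, one_mul, zero_add])
    (isTotalFlex_perturbedFermat_e3 d β (by omega)).1
  have h0 : 0 = t * p 0 := by simpa using congrFun ht 0
  have h1 : 0 = t * p 1 := by simpa using congrFun ht 1
  have h2 : 1 = t * p 2 := by simpa using congrFun ht 2
  have ht0 : t ≠ 0 := left_ne_zero_of_mul_eq_one h2.symm
  exact ⟨(mul_eq_zero.mp h0.symm).resolve_left ht0, (mul_eq_zero.mp h1.symm).resolve_left ht0⟩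

end TotalFlex

section Automorphisms

variable {d : ℕ} {β c : K}

lemma lowerTriangular_bottom_eq_zero [CharZero K] (hd : 3 ≤ d) {a p q r s g : K} (ha : a ≠ 0)
    (hg : g ≠ 0)
    (hB : substPoly !![a, 0, 0; p, q, 0; r, s, g] (perturbedFermat d β) =
      c • perturbedFermat d β) :
    r = 0 ∧ s = 0 := by
  have key (y : K) : r + y * s = 0 := by
    have h := congrFun (evalGradient_mulVec_vecMul_of_substPoly_eq hB ![1, y, 0]) 2
    simpa [evalGradient_perturbedFermat, vecMul, ha, hg, show d - 2 ≠ 0 by omega,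
      show d - 1 ≠ 0 by omega] using h
  have hr : r = 0 := by simpa using key 0
  exact ⟨hr, by simpa [hr] using key 1⟩

lemma eval_lowerTriangular_mulVec_perturbedFermat {a p q g : K}
    (hB : substPoly !![a, 0, 0; p, q, 0; 0, 0, g] (perturbedFermat d β) =
      c • perturbedFermat d β)
    (y z : K) :
    a ^ d + (p + q * y) ^ d + (g * z) ^ (d - 1) * a + β * a ^ (d - 2) * (p + q * y) ^ 2
      = c * (1 + y ^ d + z ^ (d - 1) + β * y ^ 2) := by
  have h := eval_mulVec_of_substPoly_eq hB ![1, y, z]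
  have hv : !![a, 0, 0; p, q, 0; 0, 0, g] *ᵥ ![1, y, z] = ![a, p + q * y, g * z] := by
    ext i; fin_cases i <;> simp [mulVec]
  simpa [hv, eval_perturbedFermat] using h

lemma lowerTriangular_left_eq_zero [CharZero K] (hd : 4 ≤ d) {a p q g : K} (hq : q ≠ 0)
    (hB : substPoly !![a, 0, 0; p, q, 0; 0, 0, g] (perturbedFermat d β) =
      c • perturbedFermat d β) :
    p = 0 := by
  have hpoly : (Polynomial.C q * Polynomial.X + Polynomial.C p) ^ d
      + Polynomial.C (β * a ^ (d - 2)) * (Polynomial.C q * Polynomial.X + Polynomial.C p) ^ 2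
      + Polynomial.C (a ^ d)
      = Polynomial.C c * (Polynomial.X ^ d + Polynomial.C β * Polynomial.X ^ 2 + 1) := by
    refine Polynomial.funext fun y => ?_
    have h := eval_lowerTriangular_mulVec_perturbedFermat hB y 0
    rw [mul_zero, zero_pow (by omega), zero_mul, add_zero, add_zero] at h
    simp only [Polynomial.eval_add, Polynomial.eval_mul, Polynomial.eval_pow, Polynomial.eval_C,
      Polynomial.eval_X, Polynomial.eval_one]
    linear_combination h
  have h := congrArg (Polynomial.coeff · (d - 1)) hpoly
  have hchoose : d.choose (d - 1) = d := by rw [Nat.choose_symm (by omega), Nat.choose_one_right]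
  simp only [Polynomial.coeff_add, Polynomial.coeff_C_mul, Polynomial.coeff_C_mul_X_add_C_pow,
    Polynomial.coeff_C, Polynomial.coeff_X_pow, Polynomial.coeff_one] at h
  simpa [hchoose, show d - (d - 1) = 1 by omega,
    Nat.choose_eq_zero_of_lt (show 2 < d - 1 by omega), show d - 1 ≠ d by omega,
    show d - 1 ≠ 2 by omega, show d - 1 ≠ 0 by omega, show d ≠ 0 by omega, hq] using h

lemma diagonal_entries_eq_of_substPoly_eq [CharZero K] (hd : 3 ≤ d) (hodd : Odd d) (hβ : β ≠ 0)
    {a q g : K} (ha : a ≠ 0)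
    (hB : substPoly !![a, 0, 0; 0, q, 0; 0, 0, g] (perturbedFermat d β) =
      c • perturbedFermat d β) :
    q = a ∧ g ^ (d - 1) = a ^ (d - 1) := by
  have hval := eval_lowerTriangular_mulVec_perturbedFermat hB
  obtain ⟨m, rfl⟩ := Nat.exists_eq_add_of_le' hd
  show q = a ∧ g ^ (m + 2) = a ^ (m + 2)
  have h00 : a ^ (m + 3) = c := by simpa using hval 0 0
  have h01 : a ^ (m + 3) + g ^ (m + 2) * a = c * 2 := by
    simpa [one_add_one_eq_two] using hval 0 1
  have h10 : a ^ (m + 3) + q ^ (m + 3) + β * a ^ (m + 1) * q ^ 2 = c * (2 + β) := by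
    simpa [one_add_one_eq_two] using hval 1 0
  have h20 : a ^ (m + 3) - q ^ (m + 3) + β * a ^ (m + 1) * q ^ 2 = c * β := by
    simpa [hodd.neg_pow, sub_eq_add_neg] using hval (-1) 0
  have hqd : q ^ (m + 3) = a ^ (m + 3) := by linear_combination (h10 - h20) / 2 - h00
  have hq2 : q ^ 2 = a ^ 2 := by
    refine mul_left_cancel₀ (mul_ne_zero hβ (pow_ne_zero (m + 1) ha)) ?_
    linear_combination (h10 + h20) / 2 - (1 + β) * h00
  have hqa : q = a := by
    refine (sq_eq_sq_iff_eq_or_eq_neg.mp hq2).resolve_right ?_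
    rintro rfl
    rw [hodd.neg_pow] at hqd
    exact ha (pow_eq_zero_iff (n := m + 3) (by omega) |>.mp (by linear_combination -hqd / 2))
  refine ⟨hqa, mul_right_cancel₀ ha ?_⟩
  linear_combination h01 - 2 * h00

lemma upper_entries_eq_zero_of_substPoly_eq [IsAlgClosed K] [CharZero K] (hd : 5 ≤ d)
    (hβ : β ≠ 0) {B : GL (Fin 3) K} (hc : c ≠ 0)
    (hB : substPoly (B : Matrix (Fin 3) (Fin 3) K) (perturbedFermat d β) =
      c • perturbedFermat d β) :
    (B : Matrix (Fin 3) (Fin 3) K) 0 1 = 0 ∧ (B : Matrix (Fin 3) (Fin 3) K) 0 2 = 0 ∧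
      (B : Matrix (Fin 3) (Fin 3) K) 1 2 = 0 := by
  set M := (B : Matrix (Fin 3) (Fin 3) K)
  have hcol : M *ᵥ ![0, 0, 1] = ![M 0 2, M 1 2, M 2 2] := by
    ext i; fin_cases i <;> simp [mulVec, dotProduct, Fin.sum_univ_three]
  have hflex := (isTotalFlex_perturbedFermat_e3 d β (by omega)).mulVec hc hB
  rw [hcol] at hflex
  obtain ⟨h02, h12⟩ := eq_zero_of_isTotalFlex_perturbedFermat hd hβ hflex
  simp only [cons_val] at h02 h12
  have h22 : M 2 2 ≠ 0 := by
    intro h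
    apply B.det_ne_zero
    simp [M, det_fin_three, h02, h12, h]
  have hgrad := congrFun (evalGradient_mulVec_vecMul_of_substPoly_eq hB ![0, 0, 1]) 1
  rw [hcol, h02, h12] at hgrad
  refine ⟨?_, h02, h12⟩
  simpa [evalGradient_perturbedFermat, vecMul, vecHead, show d - 1 ≠ 0 by omega, h22] using hgrad

lemma exists_eq_diagonal_of_mem_autGL [IsAlgClosed K] [CharZero K] (hd : 5 ≤ d) (hodd : Odd d)
    (hβ : β ≠ 0) {ζ : K} (hζ : IsPrimitiveRoot ζ (d - 1)) {B : GL (Fin 3) K}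
    (hB : B ∈ autGL (perturbedFermat d β)) :
    ∃ (a : Kˣ) (k : ℕ),
      (B : Matrix (Fin 3) (Fin 3) K) = diagonal ![(a : K), a, a * ζ ^ k] := by
  obtain ⟨c, hc⟩ := hB
  obtain ⟨h01, h02, h12⟩ := upper_entries_eq_zero_of_substPoly_eq hd hβ c.ne_zero hc
  set M := (B : Matrix (Fin 3) (Fin 3) K)
  have hM : M = !![M 0 0, 0, 0; M 1 0, M 1 1, 0; M 2 0, M 2 1, M 2 2] := by
    ext i j; fin_cases i <;> fin_cases j <;> simp [h01, h02, h12]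
  have hdet : M 0 0 * M 1 1 * M 2 2 ≠ 0 := by
    simpa [M, det_fin_three, h01, h02, h12] using B.det_ne_zero
  have ha := left_ne_zero_of_mul (left_ne_zero_of_mul hdet)
  have hq := right_ne_zero_of_mul (left_ne_zero_of_mul hdet)
  have hg := right_ne_zero_of_mul hdet
  rw [hM] at hc
  obtain ⟨hr, hs⟩ := lowerTriangular_bottom_eq_zero (by omega) ha hg hc
  rw [hr, hs] at hc
  have hp := lowerTriangular_left_eq_zero (by omega) hq hc
  rw [hp] at hc
  obtain ⟨hqa, hga⟩ := diagonal_entries_eq_of_substPoly_eq (by omega) hodd hβ ha hc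
  have : NeZero (d - 1) := ⟨by omega⟩
  obtain ⟨k, -, hk⟩ := hζ.eq_pow_of_pow_eq_one (ξ := M 2 2 / M 0 0)
    (by rw [div_pow, hga, div_self (pow_ne_zero _ ha)])
  refine ⟨Units.mk0 (M 0 0) ha, k, ?_⟩
  ext i j
  fin_cases i <;> fin_cases j <;> simp [h01, h02, h12, hr, hs, hp, hqa, hk, mul_div_cancel₀ _ ha]

end Automorphisms

lemma substPoly_diagonal_perturbedFermat (d : ℕ) (β : K) {ζ : K} (hζ : ζ ^ (d - 1) = 1) :
    substPoly (diagonal ![1, 1, ζ]) (perturbedFermat d β) = perturbedFermat d β := by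
  simp [substPoly, perturbedFermat, diagonal, smul_pow, hζ]

lemma diagonal_one_one_pow (z : K) (n : ℕ) :
    (diagonal ![1, 1, z]) ^ n = diagonal ![1, 1, z ^ n] := by
  rw [diagonal_pow]
  congr 1
  ext i
  fin_cases i <;> simp

lemma mem_center_iff_of_val_eq_diagonal {A : GL (Fin 3) K} {z : K}
    (hA : (A : Matrix (Fin 3) (Fin 3) K) = diagonal ![1, 1, z]) :
    A ∈ Subgroup.center (GL (Fin 3) K) ↔ z = 1 := by
  rw [GeneralLinearGroup.mem_center_iff_val_mem_range_scalar, hA]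
  constructor
  · rintro ⟨a, ha⟩
    have h0 : a = 1 := by simpa using congrFun (congrFun ha 0) 0
    have h2 : a = z := by simpa using congrFun (congrFun ha 2) 2
    rw [← h2, h0]
  · rintro rfl
    exact ⟨1, by ext i j; fin_cases i <;> fin_cases j <;> simp⟩

section ProjAut

variable {ζ : K} {A : GL (Fin 3) K}

local notation "π" => QuotientGroup.mk' (Subgroup.center (GL (Fin 3) K))

lemma orderOf_mk_eq_orderOf (hA : (A : Matrix (Fin 3) (Fin 3) K) = diagonal ![1, 1, ζ]) :
    orderOf (π A) = orderOf ζ := by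
  refine orderOf_eq_orderOf_iff.mpr fun n => ?_
  rw [← map_pow, ← MonoidHom.mem_ker, QuotientGroup.ker_mk']
  exact mem_center_iff_of_val_eq_diagonal
    (by rw [Units.val_pow_eq_pow_val, hA, diagonal_one_one_pow])

lemma projAut_perturbedFermat [IsAlgClosed K] [CharZero K] {d : ℕ} {β : K} (hd : 5 ≤ d)
    (hodd : Odd d) (hβ : β ≠ 0) (hζ : IsPrimitiveRoot ζ (d - 1))
    (hA : (A : Matrix (Fin 3) (Fin 3) K) = diagonal ![1, 1, ζ]) :
    projAut (perturbedFermat d β) = Subgroup.zpowers (π A) := by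
  refine le_antisymm ?_ (Subgroup.zpowers_le.mpr (Subgroup.mem_map_of_mem _ ⟨1, ?_⟩))
  · rintro _ ⟨B, hB, rfl⟩
    obtain ⟨a, k, hBa⟩ := exists_eq_diagonal_of_mem_autGL hd hodd hβ hζ hB
    have hB' : B = GeneralLinearGroup.scalar (Fin 3) a * A ^ k := by
      ext i j
      fin_cases i <;> fin_cases j <;>
        simp [hBa, Units.val_pow_eq_pow_val, hA, diagonal_one_one_pow]
    have hscalar : π (GeneralLinearGroup.scalar (Fin 3) a) = 1 := by
      rw [← MonoidHom.mem_ker, QuotientGroup.ker_mk', GeneralLinearGroup.center_eq_range_scalar]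
      exact ⟨a, rfl⟩
    rw [hB', map_mul, hscalar, one_mul, map_pow]
    exact Subgroup.npow_mem_zpowers _ k
  · rw [hA, substPoly_diagonal_perturbedFermat d β hζ.pow_eq_one, Units.val_one, one_smul]

end ProjAut

theorem stmt13_general {K : Type*} [Field K] [IsAlgClosed K] [CharZero K]
    (d : ℕ) (hd : 5 ≤ d) (hodd : Odd d) (β : K) (hβ : β ≠ 0)
    (F : MvPolynomial (Fin 3) K)
    (hF : F = X 0 ^ d + X 1 ^ d + X 2 ^ (d - 1) * X 0 + C β * X 0 ^ (d - 2) * X 1 ^ 2)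
    (ζ : K) (hζ : IsPrimitiveRoot ζ (d - 1))
    (A : GL (Fin 3) K)
    (hA : (A : Matrix (Fin 3) (Fin 3) K) = Matrix.diagonal ![1, 1, ζ]) :
    projAut F
      = Subgroup.zpowers (QuotientGroup.mk' (Subgroup.center (GL (Fin 3) K)) A) ∧
    Nat.card ↥(projAut F) = d - 1 := by
  obtain rfl : F = perturbedFermat d β := hF
  have hproj := projAut_perturbedFermat hd hodd hβ hζ hA
  refine ⟨hproj, ?_⟩
  rw [hproj, Nat.card_zpowers, orderOf_mk_eq_orderOf hA, ← hζ.eq_orderOf]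

/-- for odd `d ≥ 5` and `β ≠ 0` with
`F = X^d + Y^d + Z^(d-1)·X + β·X^(d-2)·Y²` nonsingular, `Aut(F)` is the cyclic group
of order `d-1` generated by the class of `diag(1,1,ζ_(d-1))`. -/
theorem stmt13 {K : Type*} [Field K] [IsAlgClosed K] [CharZero K]
    (d : ℕ) (hd : 5 ≤ d) (hodd : Odd d) (β : K) (hβ : β ≠ 0)
    (F : MvPolynomial (Fin 3) K)
    (hF : F = X 0 ^ d + X 1 ^ d + X 2 ^ (d - 1) * X 0 + C β * X 0 ^ (d - 2) * X 1 ^ 2)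
    (hns : IsNonsingular F)
    (ζ : K) (hζ : IsPrimitiveRoot ζ (d - 1))
    (A : GL (Fin 3) K)
    (hA : (A : Matrix (Fin 3) (Fin 3) K) = Matrix.diagonal ![1, 1, ζ]) :
    projAut F
      = Subgroup.zpowers (QuotientGroup.mk' (Subgroup.center (GL (Fin 3) K)) A) ∧
    Nat.card ↥(projAut F) = d - 1 :=
  stmt13_general d hd hodd β hβ F hF ζ hζ A hA

end
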